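/- The general position number of the infinite 3-dimensional grid P_∞^{□,3} (the graph on ℤ³ with L¹ graph distance) satisfies 10 ≤ gp(P_∞^{□,3}) ≤ 16. -/

import Mathlib

/-- Graph distance in the infinite 3-dim grid on ℤ³ (L¹ distance). -/
def grid3Dist (p q : ℤ × ℤ × ℤ) : ℕ :=
  (p.1 - q.1).natAbs + (p.2.1 - q.2.1).natAbs + (p.2.2 - q.2.2).natAbs

def IsGenPosDist {V : Type*} (d : V → V → ℕ) (S : Set V) : Prop :=
  ∀ u ∈ S, ∀ v ∈ S, ∀ w ∈ S, u ≠ v → v ≠ w → u ≠ w →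
    d u w ≠ d u v + d v w

/-!
Order the points of ℤ³ lexicographically and colour each pair `u < v` by the quadrant of ℤ²
containing the last two coordinates of `v - u`. If `u < v < w` with both pairs of the same
colour, every coordinate is monotone along `u, v, w`, so `v` lies on a geodesic from `u` to `w`.
In a general position set, label each point `v` by the set of colours of pairs `(u, v)` with
`u < v`: for `v < w` the colour of `(v, w)` lies in the label of `w` but not in that of `v`,
so the labels are distinct and there are at most `2 ^ 4 = 16` points.
-/

open Finset

theorem Finset.card_le_two_pow_of_forall_color_ne {α κ : Type*} [Fintype κ]
    (s : Finset α) (r : α → α → Prop) (c : α → α → κ)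
    (htotal : ∀ u ∈ s, ∀ v ∈ s, u ≠ v → r u v ∨ r v u)
    (hchain : ∀ u ∈ s, ∀ v ∈ s, ∀ w ∈ s, r u v → r v w → c u v ≠ c v w) :
    #s ≤ 2 ^ Fintype.card κ := by
  classical
  let label (v : α) : Finset κ := {k | ∃ u ∈ s, r u v ∧ c u v = k}
  have label_ne : ∀ v ∈ s, ∀ w ∈ s, r v w → label v ≠ label w := by
    intro v hv w hw hvw heq
    have hmem : c v w ∈ label v := heq ▸ mem_filter.2 ⟨mem_univ _, v, hv, hvw, rfl⟩
    obtain ⟨u, hu, huv, hcol⟩ := (mem_filter.1 hmem).2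
    exact hchain u hu v hv w hw huv hvw hcol
  have hinj : Set.InjOn label s := by
    intro v hv w hw heq
    by_contra hne
    rcases htotal v hv w hw hne with h | h
    · exact label_ne v hv w hw h heq
    · exact label_ne w hw v hv h heq.symm
  calc #s ≤ #(univ : Finset (Finset κ)) :=
        card_le_card_of_injOn label (fun _ _ => mem_coe.2 (mem_univ _)) hinj
    _ = 2 ^ Fintype.card κ := by rw [card_univ, Fintype.card_finset]

theorem Set.finite_and_ncard_le_of_forall_finset_card_le {α : Type*} {S : Set α} {n : ℕ}
    (h : ∀ t : Finset α, ↑t ⊆ S → #t ≤ n) : S.Finite ∧ S.ncard ≤ n := by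
  have hfin : S.Finite := by
    by_contra hinf
    obtain ⟨t, hts, hcard⟩ := Set.Infinite.exists_subset_card_eq hinf (n + 1)
    have := h t hts
    omega
  refine ⟨hfin, ?_⟩
  rw [Set.ncard_eq_toFinset_card S hfin]
  exact h _ hfin.coe_toFinset.subset

theorem IsGenPosDist.mono {V : Type*} {d : V → V → ℕ} {S T : Set V} (hS : IsGenPosDist d S)
    (hTS : T ⊆ S) : IsGenPosDist d T :=
  fun u hu v hv w hw => hS u (hTS hu) v (hTS hv) w (hTS hw)

theorem Int.natAbs_sub_eq_add_of_le_iff {a b c : ℤ} (h : a ≤ b ↔ b ≤ c) :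
    (a - c).natAbs = (a - b).natAbs + (b - c).natAbs := by
  omega

abbrev grid3Lex : ℤ × ℤ × ℤ → ℤ × ℤ × ℤ → Prop :=
  Prod.Lex (· < ·) (Prod.Lex (· < ·) (· < ·))

def yzQuadrant (u v : ℤ × ℤ × ℤ) : Bool × Bool :=
  (decide (u.2.1 ≤ v.2.1), decide (u.2.2 ≤ v.2.2))

theorem grid3Lex.fst_le {u v : ℤ × ℤ × ℤ} (h : grid3Lex u v) : u.1 ≤ v.1 := by
  rcases Prod.lex_def.1 h with h | ⟨h, -⟩ <;> omega

theorem grid3Dist_eq_add_of_yzQuadrant_eq {u v w : ℤ × ℤ × ℤ} (huv : grid3Lex u v)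
    (hvw : grid3Lex v w) (hq : yzQuadrant u v = yzQuadrant v w) :
    grid3Dist u w = grid3Dist u v + grid3Dist v w := by
  simp only [yzQuadrant, Prod.mk.injEq, decide_eq_decide] at hq
  have h1 := Int.natAbs_sub_eq_add_of_le_iff (a := u.1) (b := v.1) (c := w.1)
    (iff_of_true huv.fst_le hvw.fst_le)
  have h2 := Int.natAbs_sub_eq_add_of_le_iff hq.1
  have h3 := Int.natAbs_sub_eq_add_of_le_iff hq.2
  simp only [grid3Dist]
  omega

theorem IsGenPosDist.card_le_sixteen {T : Finset (ℤ × ℤ × ℤ)}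
    (hT : IsGenPosDist grid3Dist (T : Set (ℤ × ℤ × ℤ))) : #T ≤ 16 := by
  refine T.card_le_two_pow_of_forall_color_ne grid3Lex yzQuadrant
    (fun u _ v _ hne => (trichotomous_of grid3Lex u v).imp_right (·.resolve_left hne))
    (fun u hu v hv w hw huv hvw hq => ?_)
  exact hT u hu v hv w hw (ne_of_irrefl huv) (ne_of_irrefl hvw)
    (ne_of_irrefl (_root_.trans huv hvw)) (grid3Dist_eq_add_of_yzQuadrant_eq huv hvw hq)

/-- 10 ≤ gp(P∞^{□,3}) ≤ 16. -/
theorem stmt_12 :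
    (∃ S : Finset (ℤ × ℤ × ℤ),
      IsGenPosDist grid3Dist (S : Set (ℤ × ℤ × ℤ)) ∧ S.card = 10) ∧
    (∀ S : Set (ℤ × ℤ × ℤ), IsGenPosDist grid3Dist S →
      S.Finite ∧ S.ncard ≤ 16) := by
  refine ⟨?_, fun S hS => Set.finite_and_ncard_le_of_forall_finset_card_le
    fun T hTS => (hS.mono hTS).card_le_sixteen⟩
  refine ⟨{(1,2,1), (3,0,3), (1,4,3), (0,3,2), (2,1,4), (3,2,5), (3,5,1), (5,2,3),
    (4,1,2), (3,4,0)}, ?_, by decide⟩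
  unfold IsGenPosDist
  simp only [Finset.mem_coe]
  decide
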